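/- Let γ be a specification and 𝒢(γ) ≠ ∅ the convex set of consistent probability measures. A measure μ ∈ 𝒢(γ) is an extreme point of 𝒢(γ) if and only if μ is trivial on the tail σ-algebra ℱ_∞, i.e. μ(B) ∈ {0,1} for every tail event B. -/

import Mathlib

open MeasureTheory
open scoped ENNReal

/-- A specification: a family `γ = (γ_Λ)_{Λ finite}` of proper probability
kernels from `(Ω, ℱ_{Λᶜ})` to `(Ω, ℱ)` satisfying the consistency condition
`γ_Λ γ_{Λ'} = γ_Λ` for `Λ' ⊆ Λ`. -/
structure Specification (E S : Type*) [MeasurableSpace E] where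
  ker : Finset S → (S → E) → Measure (S → E)
  isProb : ∀ (Λ : Finset S) (ω : S → E), IsProbabilityMeasure (ker Λ ω)
  meas : ∀ (Λ : Finset S) (A : Set (S → E)), MeasurableSet A →
    Measurable[MeasureTheory.cylinderEvents ((↑Λ : Set S)ᶜ)] (fun ω => ker Λ ω A)
  proper : ∀ (Λ : Finset S) (ω : S → E) (B : Set (S → E)),
    MeasurableSet[MeasureTheory.cylinderEvents ((↑Λ : Set S)ᶜ)] B →
      ker Λ ω B = B.indicator (fun _ => (1 : ℝ≥0∞)) ω
  consistent : ∀ (Λ' Λ : Finset S), Λ' ⊆ Λ → ∀ (ω : S → E) (A : Set (S → E)),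
    MeasurableSet A → ∫⁻ ω', ker Λ' ω' A ∂(ker Λ ω) = ker Λ ω A

/-- `μ ∈ 𝒢(γ)`: the probability measure `μ` is consistent with (specified by)
the specification `γ`, i.e. `μ γ_Λ = μ` for all finite `Λ`. -/
def IsGibbsFor {E S : Type*} [MeasurableSpace E] (γ : Specification E S)
    (μ : Measure (S → E)) : Prop :=
  IsProbabilityMeasure μ ∧ ∀ (Λ : Finset S) (A : Set (S → E)), MeasurableSet A →
    ∫⁻ ω, γ.ker Λ ω A ∂μ = μ A

/-- The tail σ-algebra `ℱ_∞ = ⋂_{Λ finite} ℱ_{Λᶜ}`. -/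
def tailSigma (E S : Type*) [MeasurableSpace E] : MeasurableSpace (S → E) :=
  ⨅ Λ : Finset S, MeasureTheory.cylinderEvents ((↑Λ : Set S)ᶜ)

/-!
If `μ = α ν + (1 - α) ν'` with `ν, ν' ∈ 𝒢(γ)`, then `ν ≪ μ`, and by properness of `γ_Λ` the
density `dν/dμ` can be chosen `ℱ_{Λᶜ}`-measurable for every finite `Λ`. Since there are countably
many `Λ`, it is then a.e. equal to a tail-measurable function, hence a.e. constant when `μ` is
tail trivial, so `ν = μ`. Conversely, if a tail event `B` has `0 < μ B < 1`, then `μ(·|B)` and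
`μ(·|Bᶜ)` lie in `𝒢(γ)` (as `B ∈ ℱ_{Λᶜ}` for all `Λ`) and `μ` is their convex combination with
weights `μ B`, `μ Bᶜ`.
-/

open Filter ProbabilityTheory

section

variable {α ι : Type*} {m₀ : MeasurableSpace α} {μ : Measure α}

theorem exists_measurableSet_iInf_ae_eq [Countable ι] [Nonempty ι] [SemilatticeSup ι]
    {m : ι → MeasurableSpace α} (hm : Antitone m) {A : Set α}
    (hA : ∀ i, ∃ A', MeasurableSet[m i] A' ∧ A' =ᵐ[μ] A) :
    ∃ B, MeasurableSet[⨅ i, m i] B ∧ B =ᵐ[μ] A := by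
  choose A' hA'm hA'A using hA
  -- `⋂ i, ⋃ j ≥ i, A' j` lies in every `m k`, since the intersection may be taken over `i ≥ k`.
  refine ⟨⋂ i, ⋃ j ≥ i, A' j, ?_, ?_⟩
  · refine MeasurableSpace.measurableSet_iInf.2 fun k => ?_
    have hcofinal : ⋂ i, ⋃ j ≥ i, A' j = ⋂ i, ⋃ j ≥ i ⊔ k, A' j :=
      Set.Subset.antisymm (Set.subset_iInter fun i => Set.iInter_subset _ (i ⊔ k))
        (Set.iInter_mono fun i => Set.biUnion_subset_biUnion_left fun j hj => le_sup_left.trans hj)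
    rw [hcofinal]
    exact MeasurableSet.iInter fun i => MeasurableSet.biUnion (Set.to_countable _)
      fun j hj => hm (le_sup_right.trans hj) _ (hA'm j)
  · have hmem : ∀ᵐ x ∂μ, ∀ j, x ∈ A' j ↔ x ∈ A :=
      ae_all_iff.2 fun j => (hA'A j).mem_iff
    refine eventuallyEq_set.2 (hmem.mono fun x hx => ?_)
    simp only [Set.mem_iInter, Set.mem_iUnion, hx, exists_prop]
    exact ⟨fun h => (h (Classical.arbitrary ι)).choose_spec.2, fun h i => ⟨i, le_rfl, h⟩⟩

end

def IsTailTrivial {E S : Type*} [MeasurableSpace E] (μ : Measure (S → E)) : Prop :=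
  ∀ B : Set (S → E), MeasurableSet[tailSigma E S] B → μ B = 0 ∨ μ B = 1

def IsExtremeGibbsFor {E S : Type*} [MeasurableSpace E] (γ : Specification E S)
    (μ : Measure (S → E)) : Prop :=
  ∀ (ν ν' : Measure (S → E)) (α : ℝ≥0∞), IsGibbsFor γ ν → IsGibbsFor γ ν' → 0 < α → α < 1 →
    μ = α • ν + (1 - α) • ν' → ν = μ ∧ ν' = μ

section

variable {E S : Type*} [MeasurableSpace E]

lemma tailSigma_le_cylinderEvents (Λ : Finset S) :
    tailSigma E S ≤ cylinderEvents ((↑Λ : Set S)ᶜ) :=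
  iInf_le _ Λ

lemma tailSigma_le_pi : tailSigma E S ≤ MeasurableSpace.pi :=
  (tailSigma_le_cylinderEvents ∅).trans cylinderEvents_le_pi

lemma IsTailTrivial.exists_ae_eq_const [Countable S] {μ : Measure (S → E)}
    [IsProbabilityMeasure μ] (hμ : IsTailTrivial μ) {X : Type*} [Nonempty X] [MeasurableSpace X]
    [MeasurableSpace.CountablySeparated X] {f : (S → E) → X}
    (hf : ∀ Λ : Finset S, ∃ g, Measurable[cylinderEvents ((↑Λ : Set S)ᶜ)] g ∧ g =ᵐ[μ] f) :
    ∃ c, f =ᵐ[μ] Function.const _ c := by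
  classical
  refine exists_eventuallyEq_const_of_forall_separating MeasurableSet fun U hU => ?_
  obtain ⟨B, hB, hBf⟩ := exists_measurableSet_iInf_ae_eq (μ := μ)
    (m := fun Λ : Finset S => cylinderEvents ((↑Λ : Set S)ᶜ))
    (fun _ _ h => cylinderEvents_mono (Set.compl_subset_compl.2 (Finset.coe_subset.2 h)))
    fun Λ => let ⟨g, hg, hgf⟩ := hf Λ; ⟨g ⁻¹' U, hg hU, hgf.preimage U⟩
  have hBf' : ∀ᵐ x ∂μ, x ∈ B ↔ f x ∈ U := hBf.mem_iff
  rcases hμ B hB with h0 | h1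
  · right
    filter_upwards [measure_eq_zero_iff_ae_notMem.1 h0, hBf'] with x hx hxf
    exact fun h => hx (hxf.2 h)
  · left
    have hBmem : ∀ᵐ x ∂μ, x ∈ B :=
      (ae_mem_iff_measure_eq (tailSigma_le_pi B hB).nullMeasurableSet).2 (by rw [h1, measure_univ])
    filter_upwards [hBmem, hBf'] with x hx hxf
    exact hxf.1 hx

namespace Specification

variable (γ : Specification E S) (Λ : Finset S)

/-- By properness, `γ_Λ ω` is the Dirac mass at `ω` on `ℱ_{Λᶜ}`. -/
lemma ae_eq_of_measurable (ω : S → E) {β : Type*} [MeasurableSpace β]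
    [MeasurableSingletonClass β] {h : (S → E) → β}
    (hh : Measurable[cylinderEvents ((↑Λ : Set S)ᶜ)] h) :
    ∀ᵐ x ∂γ.ker Λ ω, h x = h ω := by
  rw [ae_iff]
  exact (γ.proper Λ ω _ (hh (measurableSet_singleton (h ω))).compl).trans
    (Set.indicator_of_notMem (by simp) _)

lemma setLIntegral_eq_mul (ω : S → E) (A : Set (S → E)) {h : (S → E) → ℝ≥0∞}
    (hh : Measurable[cylinderEvents ((↑Λ : Set S)ᶜ)] h) :
    ∫⁻ x in A, h x ∂γ.ker Λ ω = h ω * γ.ker Λ ω A := by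
  rw [lintegral_congr_ae (ae_restrict_of_ae (γ.ae_eq_of_measurable Λ ω hh)), setLIntegral_const]

lemma measurable_ker : Measurable (γ.ker Λ) :=
  Measure.measurable_of_measurable_coe _ fun A hA =>
    (γ.meas Λ A hA).mono cylinderEvents_le_pi le_rfl

end Specification

namespace IsGibbsFor

variable {γ : Specification E S} {μ ν : Measure (S → E)}

lemma bind_ker (hμ : IsGibbsFor γ μ) (Λ : Finset S) : μ.bind (γ.ker Λ) = μ := by
  ext A hA
  rw [Measure.bind_apply hA (γ.measurable_ker Λ).aemeasurable, hμ.2 Λ A hA]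

lemma lintegral_lintegral_ker (hμ : IsGibbsFor γ μ) (Λ : Finset S) {f : (S → E) → ℝ≥0∞}
    (hf : Measurable f) : ∫⁻ ω, ∫⁻ x, f x ∂γ.ker Λ ω ∂μ = ∫⁻ x, f x ∂μ := by
  conv_rhs => rw [← hμ.bind_ker Λ]
  rw [Measure.lintegral_bind (γ.measurable_ker Λ).aemeasurable hf.aemeasurable]

lemma lintegral_mul_ker (hμ : IsGibbsFor γ μ) (Λ : Finset S) {A : Set (S → E)}
    (hA : MeasurableSet A) {h : (S → E) → ℝ≥0∞}
    (hh : Measurable[cylinderEvents ((↑Λ : Set S)ᶜ)] h) :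
    ∫⁻ ω, h ω * γ.ker Λ ω A ∂μ = ∫⁻ x in A, h x ∂μ := by
  rw [← lintegral_indicator hA,
    ← hμ.lintegral_lintegral_ker Λ ((hh.mono cylinderEvents_le_pi le_rfl).indicator hA)]
  simp only [lintegral_indicator hA, γ.setLIntegral_eq_mul Λ _ A hh]

lemma setLIntegral_ker (hμ : IsGibbsFor γ μ) (Λ : Finset S) {A B : Set (S → E)}
    (hA : MeasurableSet A) (hB : MeasurableSet[cylinderEvents ((↑Λ : Set S)ᶜ)] B) :
    ∫⁻ ω in B, γ.ker Λ ω A ∂μ = μ (B ∩ A) := by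
  have hB' : MeasurableSet B := cylinderEvents_le_pi B hB
  calc ∫⁻ ω in B, γ.ker Λ ω A ∂μ = ∫⁻ ω, B.indicator (fun _ => 1) ω * γ.ker Λ ω A ∂μ := by
        rw [← lintegral_indicator hB']
        congr 1 with ω
        by_cases hω : ω ∈ B <;> simp [hω]
    _ = μ (B ∩ A) := by
        rw [hμ.lintegral_mul_ker Λ hA (measurable_const.indicator hB),
          lintegral_indicator_const hB', one_mul, Measure.restrict_apply hB']

lemma cond (hμ : IsGibbsFor γ μ) {B : Set (S → E)} (hB : MeasurableSet[tailSigma E S] B)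
    (hμB : μ B ≠ 0) : IsGibbsFor γ μ[|B] := by
  have := hμ.1
  refine ⟨cond_isProbabilityMeasure hμB, fun Λ A hA => ?_⟩
  rw [ProbabilityTheory.cond, lintegral_smul_measure,
    hμ.setLIntegral_ker Λ hA (tailSigma_le_cylinderEvents Λ B hB),
    Measure.smul_apply, Measure.restrict_apply hA, Set.inter_comm]

/-- The density of `ν` with respect to `μ` on `ℱ_{Λᶜ}` is one on the whole σ-algebra, because
`ν A = ∫ γ_Λ(·, A) dν` and `γ_Λ(·, A)` is `ℱ_{Λᶜ}`-measurable. -/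
lemma exists_eq_withDensity (hμ : IsGibbsFor γ μ) (hν : IsGibbsFor γ ν) (hνμ : ν ≪ μ)
    (Λ : Finset S) :
    ∃ g, Measurable[cylinderEvents ((↑Λ : Set S)ᶜ)] g ∧ ν = μ.withDensity g := by
  have := hμ.1
  have := hν.1
  have hle : cylinderEvents (X := fun _ : S => E) ((↑Λ : Set S)ᶜ) ≤ MeasurableSpace.pi :=
    cylinderEvents_le_pi
  set g := (ν.trim hle).rnDeriv (μ.trim hle)
  have hg : Measurable[cylinderEvents ((↑Λ : Set S)ᶜ)] g := Measure.measurable_rnDeriv _ _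
  have hνg : ∀ h, Measurable[cylinderEvents ((↑Λ : Set S)ᶜ)] h →
      ∫⁻ x, h x ∂ν = ∫⁻ x, g x * h x ∂μ := fun h hh => by
    rw [← lintegral_trim hle hh, ← Measure.withDensity_rnDeriv_eq _ _ (hνμ.trim hle),
      lintegral_withDensity_eq_lintegral_mul _ hg hh]
    exact lintegral_trim hle (hg.mul hh)
  refine ⟨g, hg, Measure.ext fun A hA => ?_⟩
  rw [← hν.2 Λ A hA, hνg _ (γ.meas Λ A hA), hμ.lintegral_mul_ker Λ hA hg, withDensity_apply _ hA]

lemma eq_of_absolutelyContinuous [Countable S] (hμ : IsGibbsFor γ μ) (htail : IsTailTrivial μ)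
    (hν : IsGibbsFor γ ν) (hνμ : ν ≪ μ) : ν = μ := by
  have := hμ.1
  have := hν.1
  obtain ⟨c, hc⟩ := htail.exists_ae_eq_const (f := ν.rnDeriv μ) fun Λ => by
    obtain ⟨g, hg, hνg⟩ := hμ.exists_eq_withDensity hν hνμ Λ
    refine ⟨g, hg, ?_⟩
    rw [hνg]
    exact (Measure.rnDeriv_withDensity μ (hg.mono cylinderEvents_le_pi le_rfl)).symm
  have hνc : ν = c • μ := by
    rw [← Measure.withDensity_rnDeriv_eq ν μ hνμ, withDensity_congr_ae hc]
    exact withDensity_const c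
  have hc1 : 1 = c := by simpa using congrArg (· Set.univ) hνc
  rw [hνc, ← hc1, one_smul]

lemma isExtremeGibbsFor [Countable S] (hμ : IsGibbsFor γ μ) (htail : IsTailTrivial μ) :
    IsExtremeGibbsFor γ μ := by
  intro ν ν' α hν hν' hα0 hα1 hμν
  have hνμ : ν ≪ μ := hμν ▸ (Measure.absolutelyContinuous_smul hα0.ne').add_right _
  have hν'μ : ν' ≪ μ :=
    hμν ▸ (Measure.absolutelyContinuous_smul (tsub_pos_of_lt hα1).ne').add_right' _
  exact ⟨hμ.eq_of_absolutelyContinuous htail hν hνμ, hμ.eq_of_absolutelyContinuous htail hν' hν'μ⟩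

lemma isTailTrivial (hμ : IsGibbsFor γ μ) (hext : IsExtremeGibbsFor γ μ) : IsTailTrivial μ := by
  have := hμ.1
  intro B hB
  by_contra! h
  have hB' : MeasurableSet B := tailSigma_le_pi B hB
  have hμBc : μ Bᶜ ≠ 0 := by
    rw [prob_compl_eq_one_sub hB']
    exact (tsub_pos_of_lt (prob_le_one.lt_of_ne h.2)).ne'
  have hdecomp : μ = μ B • μ[|B] + (1 - μ B) • μ[|Bᶜ] := by
    ext A hA
    rw [← prob_compl_eq_one_sub hB', Measure.add_apply, Measure.smul_apply, Measure.smul_apply,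
      smul_eq_mul, smul_eq_mul, mul_comm, mul_comm (μ Bᶜ), cond_add_cond_compl_eq hB']
  have hcond := (hext _ _ _ (hμ.cond hB h.1) (hμ.cond hB.compl hμBc)
    (pos_iff_ne_zero.2 h.1) (prob_le_one.lt_of_ne h.2) hdecomp).1
  apply hμBc
  rw [← hcond, cond_apply hB', Set.inter_compl_self, measure_empty, mul_zero]

end IsGibbsFor

end

theorem extreme_iff_tail_trivial_general
    {E S : Type*} [MeasurableSpace E] [Countable S]
    (γ : Specification E S) (μ : MeasureTheory.Measure (S → E))
    (hμ : IsGibbsFor γ μ) :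
    ((∀ (ν ν' : MeasureTheory.Measure (S → E)) (α : ℝ≥0∞),
        IsGibbsFor γ ν → IsGibbsFor γ ν' → 0 < α → α < 1 →
          μ = α • ν + (1 - α) • ν' → ν = μ ∧ ν' = μ) ↔
      (∀ B : Set (S → E), MeasurableSet[tailSigma E S] B → μ B = 0 ∨ μ B = 1)) :=
  ⟨hμ.isTailTrivial, hμ.isExtremeGibbsFor⟩

/-- A measure `μ ∈ 𝒢(γ)` is an extreme point of the convex set `𝒢(γ)` iff
it is trivial on the tail σ-algebra `ℱ_∞`. -/
theorem extreme_iff_tail_trivial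
    {E S : Type*} [Fintype E] [MeasurableSpace E] [Countable S]
    (γ : Specification E S) (μ : MeasureTheory.Measure (S → E))
    (hμ : IsGibbsFor γ μ) :
    ((∀ (ν ν' : MeasureTheory.Measure (S → E)) (α : ℝ≥0∞),
        IsGibbsFor γ ν → IsGibbsFor γ ν' → 0 < α → α < 1 →
          μ = α • ν + (1 - α) • ν' → ν = μ ∧ ν' = μ) ↔
      (∀ B : Set (S → E), MeasurableSet[tailSigma E S] B → μ B = 0 ∨ μ B = 1)) :=
  extreme_iff_tail_trivial_general γ μ hμ
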